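/- Let n ≥ 1 be an integer and λ ∈ ℝ with λ ≥ 0, and set μ := √(n² + λ). Then the function ψ₁(λ,ρ) := F((n−μ)/2, (n+μ)/2, n + 1/2, ρ²) is a solution of the radial equation on (0,1); that is, for every ρ ∈ (0,1) one has (1−ρ²)·ψ₁''(λ,ρ) + ((2n − (2n+1)ρ²)/ρ)·ψ₁'(λ,ρ) = −λ·ψ₁(λ,ρ), where primes denote derivatives in ρ. -/

import Mathlib

open Set Filter
open scoped Topology Real

/-- Pochhammer symbol `(d)_k = d(d+1)⋯(d+k−1)` over the reals. -/
noncomputable def poch (d : ℝ) (k : ℕ) : ℝ := Polynomial.eval d (ascPochhammer ℝ k)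

/-- The `k`-th coefficient `(a)_k (b)_k / (k! (c)_k)` of the Gauss hypergeometric series. -/
noncomputable def hypCoeff (a b c : ℝ) (k : ℕ) : ℝ :=
  poch a k * poch b k / ((k.factorial : ℝ) * poch c k)

/-- The Gauss hypergeometric series `F(a,b,c,x) = Σ_k ((a)_k (b)_k / (k! (c)_k)) x^k`. -/
noncomputable def hypF (a b c x : ℝ) : ℝ := ∑' k : ℕ, hypCoeff a b c k * x ^ k

/-- The first hypergeometric solution
`ψ₁(λ,ρ) = F((n−μ)/2, (n+μ)/2, n + 1/2, ρ²)` with `μ = √(n² + λ)`. -/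
noncomputable def psi1 (n : ℕ) (lam ρ : ℝ) : ℝ :=
  hypF (((n : ℝ) - Real.sqrt ((n : ℝ) ^ 2 + lam)) / 2)
    (((n : ℝ) + Real.sqrt ((n : ℝ) ^ 2 + lam)) / 2) ((n : ℝ) + 1 / 2) (ρ ^ 2)

/-- The second hypergeometric solution
`ψ₂(λ,ρ) = ρ^{1−2n} F((1−n−μ)/2, (1−n+μ)/2, 3/2 − n, ρ²)` with `μ = √(n² + λ)`. -/
noncomputable def psi2 (n : ℕ) (lam ρ : ℝ) : ℝ :=
  hypF ((1 - (n : ℝ) - Real.sqrt ((n : ℝ) ^ 2 + lam)) / 2)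
    ((1 - (n : ℝ) + Real.sqrt ((n : ℝ) ^ 2 + lam)) / 2) (3 / 2 - (n : ℝ)) (ρ ^ 2)
    / ρ ^ (2 * n - 1)

/-- The radial equation
`(1−ρ²)·φ''(ρ) + ((2n − (2n+1)ρ²)/ρ)·φ'(ρ) = −λ·φ(ρ)` at the point `ρ`. -/
def RadialEq (n : ℕ) (lam : ℝ) (φ : ℝ → ℝ) (ρ : ℝ) : Prop :=
  (1 - ρ ^ 2) * deriv (deriv φ) ρ
    + ((2 * (n : ℝ) - (2 * (n : ℝ) + 1) * ρ ^ 2) / ρ) * deriv φ ρ = -lam * φ ρ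

/-! With `x = ρ²` and `ψ₁(ρ) = F(x)`, the radial operator applied to `ψ₁` is four times the
hypergeometric operator `x(1-x)F'' + (c-(a+b+1)x)F' - abF` for `c = n + 1/2`, since `a + b = n`
and `ab = -λ/4`. The hypergeometric series is annihilated by that operator because its
coefficients satisfy `(k+1)(k+c) h_{k+1} = (a+k)(b+k) h_k`, and it can be differentiated termwise
on `|x| < 1` because `|h_{k+1}/h_k| → 1`. -/

noncomputable def powerSeriesSum (d : ℕ → ℝ) (x : ℝ) : ℝ := ∑' k : ℕ, d k * x ^ k

def derivCoeff (d : ℕ → ℝ) (k : ℕ) : ℝ := (k + 1) * d (k + 1)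

/-- A ratio-test certificate that `∑ d k x ^ k` converges on `|x| < 1`; unlike the limit of
`|d (k+1) / d k|`, it makes sense for terminating series. -/
def HasRatioBoundTendstoOne (d : ℕ → ℝ) : Prop :=
  ∃ q : ℕ → ℝ, Tendsto q atTop (𝓝 1) ∧ ∀ k, |d (k + 1)| ≤ q k * |d k|

namespace HasRatioBoundTendstoOne

variable {d : ℕ → ℝ}

theorem summable_abs_mul_pow (hd : HasRatioBoundTendstoOne d) {r : ℝ} (hr0 : 0 ≤ r)
    (hr1 : r < 1) : Summable fun k => |d k| * r ^ k := by
  obtain ⟨q, hq, hdq⟩ := hd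
  have hqr : ∀ᶠ k in atTop, q k * r < (r + 1) / 2 :=
    (hq.mul_const r).eventually (gt_mem_nhds (by linarith))
  refine summable_of_ratio_norm_eventually_le (r := (r + 1) / 2) (by linarith) ?_
  filter_upwards [hqr] with k hk
  rw [Real.norm_of_nonneg (by positivity), Real.norm_of_nonneg (by positivity), pow_succ]
  calc |d (k + 1)| * (r ^ k * r) ≤ q k * |d k| * (r ^ k * r) := by gcongr; exact hdq k
    _ = q k * r * (|d k| * r ^ k) := by ring
    _ ≤ (r + 1) / 2 * (|d k| * r ^ k) := by gcongr

theorem summable_mul_pow (hd : HasRatioBoundTendstoOne d) {x : ℝ} (hx : |x| < 1) :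
    Summable fun k => d k * x ^ k :=
  .of_norm_bounded (hd.summable_abs_mul_pow (abs_nonneg x) hx) fun k => by
    rw [Real.norm_eq_abs, abs_mul, abs_pow]

theorem derivCoeff (hd : HasRatioBoundTendstoOne d) : HasRatioBoundTendstoOne (derivCoeff d) := by
  obtain ⟨q, hq, hdq⟩ := hd
  refine ⟨fun k => (k + 2) / (k + 1) * q (k + 1), ?_, fun k => ?_⟩
  · have hfrac : Tendsto (fun k : ℕ => ((k : ℝ) + 2) / (k + 1)) atTop (𝓝 1) := by
      simpa [add_comm] using tendsto_add_mul_div_add_mul_atTop_nhds (2 : ℝ) 1 1 one_ne_zero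
    simpa using hfrac.mul (hq.comp (tendsto_add_atTop_nat 1))
  · have hk : (0 : ℝ) < k + 1 := by positivity
    simp only [_root_.derivCoeff, abs_mul, Nat.cast_add, Nat.cast_one, abs_of_pos hk,
      abs_of_pos (by positivity : (0 : ℝ) < k + 1 + 1)]
    calc (k + 1 + 1) * |d (k + 1 + 1)| ≤ (k + 1 + 1) * (q (k + 1) * |d (k + 1)|) := by
          gcongr; exact hdq (k + 1)
      _ = (k + 2) / (k + 1) * q (k + 1) * ((k + 1) * |d (k + 1)|) := by field_simp; ring

theorem hasDerivAt_powerSeriesSum (hd : HasRatioBoundTendstoOne d) {x : ℝ} (hx : |x| < 1) :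
    HasDerivAt (powerSeriesSum d) (powerSeriesSum (_root_.derivCoeff d) x) x := by
  set r := (|x| + 1) / 2 with hr
  have hr0 : 0 ≤ r := by positivity
  have hxr : x ∈ Metric.ball (0 : ℝ) r := by
    rw [Metric.mem_ball, dist_zero_right, Real.norm_eq_abs]; linarith
  have hbound : Summable fun k => |d k| * (k * r ^ (k - 1)) := by
    refine (summable_nat_add_iff 1).mp ?_
    refine (hd.derivCoeff.summable_abs_mul_pow hr0 (by linarith)).congr fun k => ?_
    simp only [_root_.derivCoeff, abs_mul, Nat.cast_add, Nat.cast_one, Nat.add_sub_cancel,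
      abs_of_pos (by positivity : (0 : ℝ) < k + 1)]
    ring
  have key := hasDerivAt_tsum_of_isPreconnected hbound Metric.isOpen_ball
    (convex_ball (0 : ℝ) r).isPreconnected
    (g := fun k z => d k * z ^ k) (g' := fun k z => d k * (k * z ^ (k - 1)))
    (fun k y _ => (hasDerivAt_pow k y).const_mul (d k)) (fun k y hy => ?_) hxr
    (hd.summable_mul_pow hx) hxr
  · have hshift : (fun k => d (k + 1) * ((k + 1 : ℕ) * x ^ (k + 1 - 1))) =
        fun k => _root_.derivCoeff d k * x ^ k := by
      ext k; simp [_root_.derivCoeff, mul_assoc, mul_left_comm]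
    rwa [tsum_eq_zero_add' (by rw [hshift]; exact hd.derivCoeff.summable_mul_pow hx), hshift,
      Nat.cast_zero, zero_mul, mul_zero, zero_add] at key
  · rw [Metric.mem_ball, dist_zero_right] at hy
    rw [Real.norm_eq_abs, abs_mul, abs_mul, abs_pow, Nat.abs_cast]
    gcongr
    exact hy.le

theorem hasDerivAt_powerSeriesSum_comp_sq (hd : HasRatioBoundTendstoOne d) {t : ℝ}
    (ht : |t| < 1) :
    HasDerivAt (fun s => powerSeriesSum d (s ^ 2))
      (2 * t * powerSeriesSum (_root_.derivCoeff d) (t ^ 2)) t := by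
  have ht2 : |t ^ 2| < 1 := by rwa [abs_pow, sq_lt_one_iff₀ (abs_nonneg t)]
  simpa [mul_comm, Function.comp_def] using
    (hd.hasDerivAt_powerSeriesSum ht2).comp (h := fun s : ℝ => s ^ 2) t (hasDerivAt_pow 2 t)

theorem deriv_deriv_powerSeriesSum_comp_sq (hd : HasRatioBoundTendstoOne d) {t : ℝ}
    (ht : |t| < 1) :
    deriv (deriv fun s => powerSeriesSum d (s ^ 2)) t =
      2 * powerSeriesSum (_root_.derivCoeff d) (t ^ 2) +
        4 * t ^ 2 * powerSeriesSum (_root_.derivCoeff (_root_.derivCoeff d)) (t ^ 2) := by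
  have hderiv : deriv (fun s => powerSeriesSum d (s ^ 2)) =ᶠ[𝓝 t]
      fun s => 2 * s * powerSeriesSum (_root_.derivCoeff d) (s ^ 2) := by
    filter_upwards [(isOpen_lt continuous_abs continuous_const).mem_nhds ht] with s hs
    exact (hd.hasDerivAt_powerSeriesSum_comp_sq hs).deriv
  have hprod : HasDerivAt (fun s => 2 * s * powerSeriesSum (_root_.derivCoeff d) (s ^ 2))
      (2 * powerSeriesSum (_root_.derivCoeff d) (t ^ 2) +
        2 * t * (2 * t * powerSeriesSum (_root_.derivCoeff (_root_.derivCoeff d)) (t ^ 2))) t := by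
    simpa [Pi.mul_def] using ((hasDerivAt_id t).const_mul 2).mul
      (hd.derivCoeff.hasDerivAt_powerSeriesSum_comp_sq ht)
  rw [hderiv.deriv_eq, hprod.deriv]
  ring

end HasRatioBoundTendstoOne

theorem hasSum_natCast_mul_mul_pow {d : ℕ → ℝ} {x s : ℝ}
    (h : HasSum (fun k => derivCoeff d k * x ^ k) s) :
    HasSum (fun k => k * d k * x ^ k) (x * s) := by
  have hshift : (fun k => x * (derivCoeff d k * x ^ k)) =
      fun k => ((k + 1 : ℕ) : ℝ) * d (k + 1) * x ^ (k + 1) := by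
    ext k; simp only [derivCoeff]; push_cast; ring
  have h1 := hshift ▸ h.mul_left x
  rw [← hasSum_nat_add_iff' 1]
  simpa using h1

section Hypergeometric

variable {a b c : ℝ}

theorem poch_succ (d : ℝ) (k : ℕ) : poch d (k + 1) = poch d k * (d + k) :=
  ascPochhammer_succ_eval k d

theorem poch_ne_zero (hc : ∀ k : ℕ, c + k ≠ 0) (k : ℕ) : poch c k ≠ 0 := by
  rw [poch, Ne, ascPochhammer_eval_eq_zero_iff]
  rintro ⟨j, -, hj⟩
  exact hc j (by linarith)

theorem hypCoeff_succ (hc : ∀ k : ℕ, c + k ≠ 0) (k : ℕ) :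
    hypCoeff a b c (k + 1) = (a + k) * (b + k) / ((k + 1) * (c + k)) * hypCoeff a b c k := by
  have := poch_ne_zero hc k
  have := hc k
  simp only [hypCoeff, poch_succ, Nat.factorial_succ, Nat.cast_mul, Nat.cast_add, Nat.cast_one]
  field_simp

theorem hasRatioBoundTendstoOne_hypCoeff (hc : ∀ k : ℕ, c + k ≠ 0) :
    HasRatioBoundTendstoOne (hypCoeff a b c) := by
  refine ⟨fun k => |(a + k) * (b + k) / ((k + 1) * (c + k))|, ?_, fun k => ?_⟩
  · have hab : Tendsto (fun k : ℕ => (a + 1 * k) / (1 + 1 * k) * ((b + 1 * k) / (c + 1 * k)))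
        atTop (𝓝 1) := by
      simpa only [div_one, mul_one] using
        (tendsto_add_mul_div_add_mul_atTop_nhds a 1 1 one_ne_zero).mul
          (tendsto_add_mul_div_add_mul_atTop_nhds b c 1 one_ne_zero)
    refine (abs_one (α := ℝ) ▸ hab.abs).congr fun k => ?_
    rw [div_mul_div_comm]
    ring_nf
  · rw [hypCoeff_succ hc, abs_mul]

theorem hypergeometric_ode (hc : ∀ k : ℕ, c + k ≠ 0) {x : ℝ} (hx : |x| < 1) :
    x * (1 - x) * powerSeriesSum (derivCoeff (derivCoeff (hypCoeff a b c))) x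
      + (c - (a + b + 1) * x) * powerSeriesSum (derivCoeff (hypCoeff a b c)) x
      - a * b * powerSeriesSum (hypCoeff a b c) x = 0 := by
  have hd := hasRatioBoundTendstoOne_hypCoeff (a := a) (b := b) hc
  have hF : HasSum _ (powerSeriesSum (hypCoeff a b c) x) := (hd.summable_mul_pow hx).hasSum
  have hF' : HasSum _ (powerSeriesSum (derivCoeff (hypCoeff a b c)) x) :=
    (hd.derivCoeff.summable_mul_pow hx).hasSum
  have hF'' : HasSum _ (powerSeriesSum (derivCoeff (derivCoeff (hypCoeff a b c))) x) :=
    (hd.derivCoeff.derivCoeff.summable_mul_pow hx).hasSum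
  have hxF' := hasSum_natCast_mul_mul_pow hF'
  have hxF'' := hasSum_natCast_mul_mul_pow hF''
  have hxxF'' := hasSum_natCast_mul_mul_pow (d := fun k => (k - 1) * hypCoeff a b c k) <| by
    convert hxF'' using 3 with k
    simp only [derivCoeff]; push_cast; ring
  have hsum := ((hxF''.sub hxxF'').add ((hF'.mul_left c).sub (hxF'.mul_left (a + b + 1)))).sub
    (hF.mul_left (a * b))
  -- the coefficient of `x ^ k` is `(k + 1) (k + c) h (k + 1) - (a + k) (b + k) h k`
  have hcoeff : ∀ k : ℕ, (k * derivCoeff (hypCoeff a b c) k * x ^ k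
      - k * ((k - 1) * hypCoeff a b c k) * x ^ k
      + (c * (derivCoeff (hypCoeff a b c) k * x ^ k)
        - (a + b + 1) * (k * hypCoeff a b c k * x ^ k)))
      - a * b * (hypCoeff a b c k * x ^ k) = 0 := fun k => by
    have := hc k
    simp only [derivCoeff, hypCoeff_succ hc]
    field_simp
    ring
  simp only [hcoeff] at hsum
  linear_combination hsum.unique hasSum_zero

end Hypergeometric

theorem radialEq_hypF_comp_sq {a b lam : ℝ} (n : ℕ) (hsum : a + b = n) (hab : a * b = -lam / 4)
    {ρ : ℝ} (hρ0 : ρ ≠ 0) (hρ : |ρ| < 1) :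
    RadialEq n lam (fun s => hypF a b ((n : ℝ) + 1 / 2) (s ^ 2)) ρ := by
  set c := (n : ℝ) + 1 / 2 with hc_def
  have hc : ∀ k : ℕ, c + k ≠ 0 := fun k => by positivity
  have hd := hasRatioBoundTendstoOne_hypCoeff (a := a) (b := b) hc
  have hode := hypergeometric_ode (a := a) (b := b) hc (x := ρ ^ 2) (by
    rwa [abs_pow, sq_lt_one_iff₀ (abs_nonneg ρ)])
  show RadialEq n lam (fun s => powerSeriesSum (hypCoeff a b c) (s ^ 2)) ρ
  rw [RadialEq, hd.deriv_deriv_powerSeriesSum_comp_sq hρ,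
    (hd.hasDerivAt_powerSeriesSum_comp_sq hρ).deriv]
  set F' := powerSeriesSum (derivCoeff (hypCoeff a b c)) (ρ ^ 2)
  linear_combination (norm := skip) 4 * hode + 4 * powerSeriesSum (hypCoeff a b c) (ρ ^ 2) * hab
    + 4 * ρ ^ 2 * F' * hsum - 4 * F' * hc_def
  field_simp
  ring

theorem psi1_solves_radialEq_general (n : ℕ) (lam : ℝ) (hlam : 0 ≤ lam) :
    ∀ ρ ∈ Set.Ioo (0 : ℝ) 1, RadialEq n lam (psi1 n lam) ρ := by
  rintro ρ ⟨hρ0, hρ1⟩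
  have hμ := Real.sq_sqrt (by positivity : (0 : ℝ) ≤ n ^ 2 + lam)
  exact radialEq_hypF_comp_sq n (by ring) (by linear_combination -hμ / 4) hρ0.ne'
    (by rwa [abs_of_pos hρ0])

/-- `ψ₁(λ,·)` solves the radial equation on `(0,1)`. -/
theorem psi1_solves_radialEq (n : ℕ) (hn : 1 ≤ n) (lam : ℝ) (hlam : 0 ≤ lam) :
    ∀ ρ ∈ Set.Ioo (0 : ℝ) 1, RadialEq n lam (psi1 n lam) ρ :=
  psi1_solves_radialEq_general n lam hlam
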